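/- Let M be a Coxeter matrix on a finite set S = {1,…,n} and let W(M) be its Coxeter group. On ℝ^n with standard basis α_1,…,α_n, define the bilinear form B(α_i, α_i) = 2, B(α_i, α_j) = −2·cos(π/m_{ij}) if i ≠ j and m_{ij} < ∞, and B(α_i, α_j) = −2 if m_{ij} = ∞, and let r_i : ℝ^n → ℝ^n be the reflection r_i(v) = v − B(α_i, v) α_i. Then there is a unique group homomorphism ρ : W(M) → GL_n(ℝ) with ρ(s_i) = r_i, and this geometric representation ρ is injective. -/

import Mathlib

/-- The bilinear pairing of the geometric representation of a Coxeter group: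
`B(αᵢ, αᵢ) = 2`, `B(αᵢ, αⱼ) = -2·cos(π/m_{ij})` if `i ≠ j` and `m_{ij} < ∞` (recall that
`m_{ij} = 0` encodes `m_{ij} = ∞`), and `B(αᵢ, αⱼ) = -2` if `m_{ij} = ∞`. -/
noncomputable def geomPairing {n : ℕ} (M : CoxeterMatrix (Fin n)) (i j : Fin n) : ℝ :=
  if i = j then 2
  else if M i j = 0 then -2
  else -(2 * Real.cos (Real.pi / (M i j)))

/-- The matrix of the reflection `rᵢ(v) = v - B(αᵢ, v) αᵢ` on `ℝ^n`, i.e. the linear map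
sending the basis vector `αⱼ` to `αⱼ - B(αᵢ, αⱼ) αᵢ`. -/
noncomputable def geomRefl {n : ℕ} (M : CoxeterMatrix (Fin n)) (i : Fin n) :
    Matrix (Fin n) (Fin n) ℝ :=
  Matrix.of fun k j =>
    (if k = j then 1 else 0) - geomPairing M i j * (if k = i then 1 else 0)
/-!
The reflection `rᵢ` is `1 - αᵢ ⊗ B(αᵢ, ·)`. As `B(αᵢ, αᵢ) = 2` it is an involution, and
`rᵢ rⱼ = 1 + φ L` with `φ = (αᵢ αⱼ)`. Since `L φ` is invertible when `m = m_ij ≥ 2`, `(rᵢ rⱼ)ᵐ = 1`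
follows from `(1 + L φ)ᵐ = 1` for the `2 × 2` matrix `1 + L φ`, whose powers are given by the
Chebyshev polynomials `Uₖ` at `cos (π / m)`. Hence `ρ` exists, and it is unique because the `sᵢ`
generate `W(M)`.

Faithfulness is Tits' argument: if `ℓ(w sᵢ) > ℓ(w)` then `ρ(w) αᵢ ≥ 0` coordinatewise. If `w ≠ 1`
has a right descent `sⱼ`, write `w = u v` with `ℓ(w) = ℓ(u) + ℓ(v)`, `v` a word in `sᵢ, sⱼ` and
`ℓ(u)` minimal. Then `v` is an alternating word of length `k < m_ij`, so `ρ(v) αᵢ` is a combination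
of `αᵢ, αⱼ` with coefficients `Uₖ, Uₖ₋₁` at `cos (π / m_ij)` (at `1` if `m_ij = ∞`), which are
`≥ 0`; and neither `sᵢ` nor `sⱼ` is a descent of the shorter `u`, so induction applies to
`ρ(u) αᵢ` and `ρ(u) αⱼ`. A nontrivial `w` has a right descent `sᵢ`, and `ρ(w) = 1` would give
`ρ(w sᵢ) αᵢ = -αᵢ`.
-/

open Real Matrix Polynomial Polynomial.Chebyshev CoxeterSystem

namespace Matrix

variable {ι κ R : Type*} [CommRing R]

theorem transpose_of_mul_of_fin_two (a₁ a₂ c₁ c₂ : ι → R) :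
    (of ![a₁, a₂])ᵀ * of ![c₁, c₂] = vecMulVec a₁ c₁ + vecMulVec a₂ c₂ := by
  ext k l
  simp [mul_apply, Fin.sum_univ_two, vecMulVec_apply]

theorem of_mul_transpose_of_fin_two [Fintype ι] (c₁ c₂ a₁ a₂ : ι → R) :
    of ![c₁, c₂] * (of ![a₁, a₂])ᵀ = !![c₁ ⬝ᵥ a₁, c₁ ⬝ᵥ a₂; c₂ ⬝ᵥ a₁, c₂ ⬝ᵥ a₂] := by
  ext s t
  fin_cases s <;> fin_cases t <;> rfl

theorem pow_fin_two_eq_chebyshev_U (x : R) (k : ℕ) :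
    !![4 * x ^ 2 - 1, -(2 * x); 2 * x, -1] ^ k =
      !![(U R (2 * k)).eval x, -(U R (2 * k - 1)).eval x;
        (U R (2 * k - 1)).eval x, -(U R (2 * k - 2)).eval x] := by
  induction k with
  | zero => simp [one_fin_two]
  | succ k ih =>
    have h₀ := congrArg (eval x) (U_eq R (2 * k))
    have h₁ := congrArg (eval x) (U_add_one R (2 * k))
    have h₂ := congrArg (eval x) (U_add_two R (2 * k))
    simp only [eval_sub, eval_mul, eval_ofNat, eval_X] at h₀ h₁ h₂
    have e₀ : (2 * ((k + 1 : ℕ) : ℤ)) = 2 * k + 2 := by push_cast; ring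
    have e₁ : (2 * ((k + 1 : ℕ) : ℤ)) - 1 = 2 * k + 1 := by push_cast; ring
    have e₂ : (2 * ((k + 1 : ℕ) : ℤ)) - 2 = 2 * k := by push_cast; ring
    rw [pow_succ, ih, mul_fin_two, e₁, e₂, e₀, h₂, h₁, h₀]
    ring_nf

variable [Fintype ι] [DecidableEq ι]

theorem one_sub_vecMulVec_mulVec (a b v : ι → R) :
    (1 - vecMulVec a b) *ᵥ v = v - (b ⬝ᵥ v) • a := by
  rw [sub_mulVec, one_mulVec, vecMulVec_mulVec, op_smul_eq_smul]

theorem one_sub_vecMulVec_mul_self {a b : ι → R} (h : b ⬝ᵥ a = 2) :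
    (1 - vecMulVec a b) * (1 - vecMulVec a b) = 1 := by
  rw [sub_mul, mul_sub, mul_sub, vecMulVec_mul_vecMulVec, h, two_smul, vecMulVec_add]
  noncomm_ring

theorem one_sub_vecMulVec_mul_one_sub_vecMulVec (a₁ a₂ b₁ b₂ : ι → R) :
    (1 - vecMulVec a₁ b₁) * (1 - vecMulVec a₂ b₂) =
      1 + (of ![a₁, a₂])ᵀ * of ![-(b₁ - (b₁ ⬝ᵥ a₂) • b₂), -b₂] := by
  rw [transpose_of_mul_of_fin_two, sub_mul, mul_sub, mul_sub, vecMulVec_mul_vecMulVec,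
    vecMulVec_neg, vecMulVec_neg, vecMulVec_sub, vecMulVec_smul]
  simp only [one_mul, mul_one]
  abel

theorem one_add_mul_pow_eq_one [Fintype κ] [DecidableEq κ] (φ : Matrix ι κ R) (L : Matrix κ ι R)
    {N : ℕ} (hLφ : IsUnit (L * φ)) (hN : (1 + L * φ) ^ N = 1) : (1 + φ * L) ^ N = 1 := by
  have intertwine (a : ℕ) : (1 + φ * L) ^ a * φ = φ * (1 + L * φ) ^ a := by
    induction a with
    | zero => simp
    | succ a ih =>
      have : (1 + φ * L) * φ = φ * (1 + L * φ) := by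
        rw [Matrix.add_mul, Matrix.mul_add, Matrix.one_mul, Matrix.mul_one, Matrix.mul_assoc]
      rw [pow_succ, Matrix.mul_assoc, this, ← Matrix.mul_assoc, ih, Matrix.mul_assoc, ← pow_succ]
  have hsum : ∑ a ∈ Finset.range N, (1 + L * φ) ^ a = 0 := by
    have := geom_sum_mul (1 + L * φ) N
    rwa [hN, sub_self, add_sub_cancel_left, hLφ.mul_left_eq_zero] at this
  have := geom_sum_mul (1 + φ * L) N
  rw [add_sub_cancel_left, ← Matrix.mul_assoc, Matrix.sum_mul,
    Finset.sum_congr rfl fun a _ => intertwine a, ← Matrix.mul_sum, hsum, Matrix.mul_zero,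
    Matrix.zero_mul] at this
  exact sub_eq_zero.mp this.symm

-- `k - 1` is an integer here: for `k = 0` the coefficient is `U R (-1) = 0`.
theorem prod_map_alternatingWord_mulVec {B : Type*} (r : B → Matrix ι ι R) (a : B → ι → R)
    {i j : B} {x : R} (hi : r i *ᵥ a i = -a i) (hj : r j *ᵥ a j = -a j)
    (hij : r i *ᵥ a j = a j + (2 * x) • a i) (hji : r j *ᵥ a i = a i + (2 * x) • a j) (k : ℕ) :
    ((alternatingWord i j k).map r).prod *ᵥ a i =
      if Even k then (U R k).eval x • a i + (U R (k - 1)).eval x • a j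
      else (U R (k - 1)).eval x • a i + (U R k).eval x • a j := by
  induction k with
  | zero => simp [alternatingWord]
  | succ k ih =>
    have hU := congrArg (eval x) (U_add_one R k)
    simp only [eval_sub, eval_mul, eval_ofNat, eval_X] at hU
    rw [alternatingWord_succ', List.map_cons, List.prod_cons, ← mulVec_mulVec, ih]
    push_cast
    rw [add_sub_cancel_right, hU]
    rcases Nat.even_or_odd k with hk | hk
    · simp only [hk, Nat.even_add_one, not_true_eq_false, if_true, if_false, mulVec_add,
        mulVec_smul, hji, hj]
      module
    · simp only [Nat.not_even_iff_odd.mpr hk, Nat.even_add_one, not_false_eq_true, if_true,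
        if_false, mulVec_add, mulVec_smul, hi, hij]
      module

end Matrix

theorem Real.sin_pi_div_pos {m : ℕ} (hm : 2 ≤ m) : 0 < sin (π / m) := by
  have hm' : (2 : ℝ) ≤ m := by exact_mod_cast hm
  apply sin_pos_of_pos_of_lt_pi (by positivity)
  rw [div_lt_iff₀ (by positivity)]
  nlinarith [pi_pos]

namespace Polynomial.Chebyshev

theorem U_real_cos_pi_div_two_mul_add {m : ℕ} (hm : 2 ≤ m) (k : ℤ) :
    (U ℝ (2 * m + k)).eval (cos (π / m)) = (U ℝ k).eval (cos (π / m)) := by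
  have hm0 : (m : ℝ) ≠ 0 := by positivity
  apply mul_right_cancel₀ (sin_pi_div_pos hm).ne'
  rw [U_real_cos, U_real_cos]
  push_cast
  rw [show ((2 * m + k + 1) * (π / m) : ℝ) = (k + 1) * (π / m) + 2 * π by field_simp; ring,
    sin_add_two_pi]

theorem U_real_cos_pi_div_nonneg {m : ℕ} (hm : 2 ≤ m) {k : ℤ} (hk₀ : -1 ≤ k) (hkm : k < m) :
    0 ≤ (U ℝ k).eval (cos (π / m)) := by
  refine nonneg_of_mul_nonneg_left ?_ (sin_pi_div_pos hm)
  rw [U_real_cos]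
  have hk₀' : (-1 : ℝ) ≤ k := by exact_mod_cast hk₀
  have hkm' : (k : ℝ) + 1 ≤ m := by exact_mod_cast hkm
  apply sin_nonneg_of_nonneg_of_le_pi
  · have : 0 ≤ π / m := by positivity
    nlinarith
  · calc ((k : ℝ) + 1) * (π / m) ≤ m * (π / m) := by gcongr
      _ = π := by field_simp

end Polynomial.Chebyshev

theorem Matrix.one_sub_vecMulVec_mul_pow_eq_one {ι : Type*} [Fintype ι] [DecidableEq ι]
    {a₁ a₂ b₁ b₂ : ι → ℝ} {m : ℕ} (hm : 2 ≤ m) (h₁ : b₁ ⬝ᵥ a₁ = 2) (h₂ : b₂ ⬝ᵥ a₂ = 2)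
    (h₁₂ : b₁ ⬝ᵥ a₂ = -(2 * cos (π / m))) (h₂₁ : b₂ ⬝ᵥ a₁ = -(2 * cos (π / m))) :
    ((1 - vecMulVec a₁ b₁) * (1 - vecMulVec a₂ b₂)) ^ m = 1 := by
  set x := cos (π / m)
  have hLφ : of ![-(b₁ - (b₁ ⬝ᵥ a₂) • b₂), -b₂] * (of ![a₁, a₂])ᵀ =
      !![4 * x ^ 2 - 2, -(2 * x); 2 * x, -2] := by
    rw [of_mul_transpose_of_fin_two]
    simp only [neg_dotProduct, sub_dotProduct, smul_dotProduct, h₁, h₂, h₁₂, h₂₁, smul_eq_mul]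
    ring_nf
  rw [one_sub_vecMulVec_mul_one_sub_vecMulVec]
  apply one_add_mul_pow_eq_one
  · have hx : x ^ 2 < 1 := by
      rw [cos_sq', sub_lt_self_iff]
      exact pow_pos (sin_pi_div_pos hm) 2
    rw [hLφ, isUnit_iff_isUnit_det, det_fin_two_of, isUnit_iff_ne_zero]
    nlinarith
  · have hP : 1 + !![4 * x ^ 2 - 2, -(2 * x); 2 * x, -2] =
        !![4 * x ^ 2 - 1, -(2 * x); 2 * x, -1] := by
      simp only [one_fin_two, of_add_of, cons_add_cons, empty_add_empty]
      ring_nf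
    have hU₀ : (U ℝ (2 * m)).eval x = 1 := by
      simpa using U_real_cos_pi_div_two_mul_add hm 0
    have hU₁ : (U ℝ (2 * m - 1)).eval x = 0 := by
      simpa [← sub_eq_add_neg] using U_real_cos_pi_div_two_mul_add hm (-1)
    have hU₂ : (U ℝ (2 * m - 2)).eval x = -1 := by
      simpa [← sub_eq_add_neg] using U_real_cos_pi_div_two_mul_add hm (-2)
    rw [hLφ, hP, pow_fin_two_eq_chebyshev_U, hU₀, hU₁, hU₂, neg_zero, neg_neg, one_fin_two]

theorem List.eq_alternatingWord_of_isChain_ne {B : Type*} {i j : B} {ω : List B}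
    (hmem : ∀ x ∈ ω, x = i ∨ x = j) (hchain : ω.IsChain (· ≠ ·)) (hlast : ω.getLast? ≠ some i) :
    ω = alternatingWord i j ω.length := by
  induction ω using List.reverseRecOn generalizing i j with
  | nil => rfl
  | append_singleton ω x ih =>
    obtain rfl : x = j := (hmem x (by simp)).resolve_left (by simpa using hlast)
    rw [List.isChain_append] at hchain
    rw [List.length_append, List.length_singleton, alternatingWord_succ, List.concat_eq_append,
      ← ih (fun y hy => (hmem y (by simp [hy])).symm) hchain.1]
    intro h
    simpa using hchain.2.2 x h x

theorem CoxeterMatrix.two_le_of_ne {B : Type*} (M : CoxeterMatrix B) {i j : B} (hij : i ≠ j)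
    (hM : M i j ≠ 0) : 2 ≤ M i j := by
  have := M.off_diagonal i j hij
  omega

namespace CoxeterSystem

variable {B W : Type*} [Group W] {M : CoxeterMatrix B} (cs : CoxeterSystem M W)

local prefix:100 "s " => cs.simple
local prefix:100 "π " => cs.wordProd
local prefix:100 "ℓ " => cs.length

theorem isChain_ne_of_isReduced {ω : List B} (hω : cs.IsReduced ω) : ω.IsChain (· ≠ ·) := by
  rw [List.isChain_iff_forall_rel_of_append_cons_cons]
  rintro x y l₁ l₂ rfl rfl
  have hπ : π (l₁ ++ x :: x :: l₂) = π (l₁ ++ l₂) := by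
    simp only [wordProd_append, wordProd_cons, cs.simple_mul_simple_cancel_left]
  have := cs.length_wordProd_le (l₁ ++ l₂)
  rw [IsReduced, hπ] at hω
  simp only [List.length_append, List.length_cons] at hω this
  omega

theorem exists_parabolic_factorization (J : Set B) (w : W) :
    ∃ u ω, (∀ x ∈ ω, x ∈ J) ∧ w = u * π ω ∧ ℓ w = ℓ u + ω.length ∧
      ∀ x ∈ J, ℓ u < ℓ (u * s x) := by
  induction hn : ℓ w using Nat.strong_induction_on generalizing w with
  | _ n ih =>
  by_cases hw : ∀ x ∈ J, ℓ w < ℓ (w * s x)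
  · exact ⟨w, [], by simp, by simp, by simp [hn], hw⟩
  push Not at hw
  obtain ⟨x, hxJ, hx⟩ := hw
  have hx' : ℓ (w * s x) + 1 = ℓ w := by
    have := cs.length_mul_simple w x
    omega
  obtain ⟨u, ω, hω, hwu, hlen, hu⟩ := ih _ (by omega) (w * s x) rfl
  refine ⟨u, ω ++ [x], by simpa [or_imp, forall_and] using ⟨hω, hxJ⟩, ?_, ?_, hu⟩
  · rw [wordProd_append, wordProd_singleton, ← mul_assoc, ← hwu, simple_mul_simple_cancel_right]
  · rw [List.length_append, List.length_singleton]
    omega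

theorem eq_alternatingWord_of_isReduced {i j : B} {ω : List B} (hmem : ∀ x ∈ ω, x = i ∨ x = j)
    (hω : cs.IsReduced ω) (hi : ℓ (π ω) < ℓ (π ω * s i)) :
    ω = alternatingWord i j ω.length ∧ (M i j = 0 ∨ ω.length < M i j) := by
  have longer_of_eq_mul_simple (ω' : List B) (h : π ω = π ω' * s i) :
      ω.length < ω'.length := by
    have h' : π ω * s i = π ω' := by rw [h, simple_mul_simple_cancel_right]
    have := cs.length_wordProd_le ω'
    rw [h', hω.eq] at hi
    omega
  have hlast : ω.getLast? ≠ some i := by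
    intro h
    obtain ⟨ω', rfl⟩ := List.getLast?_eq_some_iff.mp h
    simpa using longer_of_eq_mul_simple ω' (by rw [wordProd_append, wordProd_singleton])
  have halt := List.eq_alternatingWord_of_isChain_ne hmem (cs.isChain_ne_of_isReduced hω) hlast
  refine ⟨halt, ?_⟩
  by_contra! h
  obtain ⟨hM, hle⟩ := h
  rcases hle.lt_or_eq with hlt | heq
  · exact cs.not_isReduced_alternatingWord i j hM hlt (halt ▸ hω)
  · obtain ⟨k, hk⟩ := Nat.exists_eq_succ_of_ne_zero hM
    have hbraid : π ω = π (alternatingWord i j k) * s i := by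
      rw [halt, ← heq, ← braidWord, cs.wordProd_braidWord_eq, braidWord, M.symmetric, hk,
        alternatingWord_succ, wordProd_concat]
    have := longer_of_eq_mul_simple _ hbraid
    rw [length_alternatingWord] at this
    omega

theorem exists_eq_mul_alternatingWord {w : W} {i j : B} (hi : ℓ w < ℓ (w * s i))
    (hj : ℓ (w * s j) < ℓ w) :
    ∃ u k, w = u * π (alternatingWord i j k) ∧ ℓ u < ℓ w ∧ ℓ u < ℓ (u * s i) ∧
      ℓ u < ℓ (u * s j) ∧ (M i j = 0 ∨ k < M i j) := by
  obtain ⟨u, ω, hmem, rfl, hlen, hu⟩ := cs.exists_parabolic_factorization {i, j} w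
  have hω : cs.IsReduced ω := by
    have := cs.length_mul_le u (π ω)
    have := cs.length_wordProd_le ω
    rw [IsReduced]
    omega
  have hωi : ℓ (π ω) < ℓ (π ω * s i) := by
    have := cs.length_mul_le u (π ω * s i)
    rw [mul_assoc] at hi
    rcases cs.length_mul_simple (π ω) i with h | h
    · omega
    · rw [hω.eq] at h
      omega
  obtain ⟨halt, hk⟩ := cs.eq_alternatingWord_of_isReduced (by simpa using hmem) hω hωi
  have hne : ω ≠ [] := by
    rintro rfl
    have := hu j (by simp)
    simp only [wordProd_nil, mul_one] at hj
    omega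
  refine ⟨u, ω.length, by rw [← halt], ?_, hu i (by simp), hu j (by simp), hk⟩
  have := List.length_pos_iff.mpr hne
  omega

end CoxeterSystem

section GeometricRepresentation

variable {n : ℕ} (M : CoxeterMatrix (Fin n))

theorem geomPairing_self (i : Fin n) : geomPairing M i i = 2 := by
  simp [geomPairing]

theorem geomPairing_comm (i j : Fin n) : geomPairing M i j = geomPairing M j i := by
  rcases eq_or_ne i j with rfl | h
  · rfl
  · simp [geomPairing, h, h.symm, M.symmetric i j]

theorem geomRefl_eq (i : Fin n) :
    geomRefl M i = 1 - vecMulVec (Pi.single i 1) (geomPairing M i) := by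
  ext k j
  simp [geomRefl, vecMulVec_apply, one_apply, Pi.single_apply, mul_comm]

theorem geomRefl_mulVec_single (i j : Fin n) :
    geomRefl M i *ᵥ Pi.single j 1 = Pi.single j 1 - geomPairing M i j • Pi.single i 1 := by
  rw [geomRefl_eq, one_sub_vecMulVec_mulVec, dotProduct_single, mul_one]

theorem geomRefl_mulVec_single_self (i : Fin n) :
    geomRefl M i *ᵥ Pi.single i 1 = -Pi.single i 1 := by
  rw [geomRefl_mulVec_single, geomPairing_self]
  module

theorem geomRefl_mul_self (i : Fin n) : geomRefl M i * geomRefl M i = 1 := by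
  rw [geomRefl_eq]
  exact one_sub_vecMulVec_mul_self (by rw [dotProduct_single, mul_one, geomPairing_self])

theorem geomRefl_mul_pow_of_ne_zero {i j : Fin n} (hij : i ≠ j) (hM : M i j ≠ 0) :
    (geomRefl M i * geomRefl M j) ^ M i j = 1 := by
  have h (k l : Fin n) : geomPairing M k ⬝ᵥ Pi.single l 1 = geomPairing M k l := by
    rw [dotProduct_single, mul_one]
  rw [geomRefl_eq, geomRefl_eq]
  refine one_sub_vecMulVec_mul_pow_eq_one (M.two_le_of_ne hij hM) ?_ ?_ ?_ ?_
  · rw [h, geomPairing_self]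
  · rw [h, geomPairing_self]
  · simp [h, geomPairing, hij, hM]
  · simp [h, geomPairing, hij.symm, M.symmetric j i, hM]

noncomputable def geomReflUnit (i : Fin n) : GL (Fin n) ℝ :=
  ⟨geomRefl M i, geomRefl M i, geomRefl_mul_self M i, geomRefl_mul_self M i⟩

theorem isLiftable_geomReflUnit : M.IsLiftable (geomReflUnit M) := by
  intro i j
  rcases eq_or_ne i j with rfl | hij
  · rw [M.diagonal, pow_one]
    exact Units.ext (geomRefl_mul_self M i)
  rcases eq_or_ne (M i j) 0 with hM | hM
  · rw [hM, pow_zero]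
  · exact Units.ext (geomRefl_mul_pow_of_ne_zero M hij hM)

noncomputable def geomRepr : M.Group →* GL (Fin n) ℝ :=
  M.toCoxeterSystem.lift ⟨geomReflUnit M, isLiftable_geomReflUnit M⟩

theorem geomRepr_simple (i : Fin n) :
    (geomRepr M (M.simple i) : Matrix (Fin n) (Fin n) ℝ) = geomRefl M i := by
  rw [geomRepr, ← M.toCoxeterSystem_simple, lift_apply_simple]
  rfl

variable {M}

theorem exists_nonneg_geomRefl_alternatingWord_mulVec_single {i j : Fin n} (hij : i ≠ j) {k : ℕ}
    (hk : M i j = 0 ∨ k < M i j) :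
    ∃ a b : ℝ, 0 ≤ a ∧ 0 ≤ b ∧
      ((alternatingWord i j k).map (geomRefl M)).prod *ᵥ Pi.single i 1 =
        a • Pi.single i 1 + b • Pi.single j 1 := by
  obtain ⟨x, hx, hU⟩ : ∃ x : ℝ, geomPairing M i j = -(2 * x) ∧
      ∀ l : ℤ, -1 ≤ l → l ≤ k → 0 ≤ (U ℝ l).eval x := by
    rcases eq_or_ne (M i j) 0 with hM | hM
    · refine ⟨1, by simp [geomPairing, hij, hM], fun l hl _ => ?_⟩
      rw [U_eval_one]
      exact_mod_cast (by omega : 0 ≤ l + 1)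
    · refine ⟨cos (π / M i j), by simp [geomPairing, hij, hM], fun l hl hlk => ?_⟩
      have := hk.resolve_left hM
      exact U_real_cos_pi_div_nonneg (M.two_le_of_ne hij hM) hl (by omega)
  rw [prod_map_alternatingWord_mulVec (geomRefl M) (fun l => Pi.single l 1) (x := x)
    (geomRefl_mulVec_single_self M i) (geomRefl_mulVec_single_self M j)
    (by rw [geomRefl_mulVec_single, hx]; module)
    (by rw [geomRefl_mulVec_single, geomPairing_comm, hx]; module)]
  have h₀ := hU k (by omega) le_rfl
  have h₁ := hU (k - 1) (by omega) (by omega)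
  split_ifs
  exacts [⟨_, _, h₀, h₁, rfl⟩, ⟨_, _, h₁, h₀, rfl⟩]

variable {W : Type*} [Group W] (cs : CoxeterSystem M W) {ρ : W →* GL (Fin n) ℝ}

theorem map_wordProd_of_map_simple
    (hρ : ∀ i, (ρ (cs.simple i) : Matrix (Fin n) (Fin n) ℝ) = geomRefl M i) (ω : List (Fin n)) :
    (ρ (cs.wordProd ω) : Matrix (Fin n) (Fin n) ℝ) = (ω.map (geomRefl M)).prod := by
  induction ω with
  | nil => simp
  | cons i ω ih => rw [wordProd_cons, map_mul, Units.val_mul, hρ, ih, List.map_cons, List.prod_cons]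

theorem mulVec_single_nonneg_of_map_simple
    (hρ : ∀ i, (ρ (cs.simple i) : Matrix (Fin n) (Fin n) ℝ) = geomRefl M i) {w : W} {i : Fin n}
    (hi : cs.length w < cs.length (w * cs.simple i)) :
    0 ≤ (ρ w : Matrix (Fin n) (Fin n) ℝ) *ᵥ Pi.single i 1 := by
  induction hN : cs.length w using Nat.strong_induction_on generalizing w i with
  | _ N ih =>
  rcases eq_or_ne w 1 with rfl | hw
  · rw [map_one, Units.val_one, one_mulVec]
    exact Pi.single_nonneg.mpr zero_le_one
  obtain ⟨j, hj⟩ := cs.exists_rightDescent_of_ne_one hw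
  have hj : cs.length (w * cs.simple j) < cs.length w := hj
  have hij : i ≠ j := by
    rintro rfl
    omega
  obtain ⟨u, k, rfl, hu, hui, huj, hk⟩ := cs.exists_eq_mul_alternatingWord hi hj
  obtain ⟨a, b, ha, hb, hab⟩ := exists_nonneg_geomRefl_alternatingWord_mulVec_single hij hk
  rw [map_mul, Units.val_mul, ← mulVec_mulVec, map_wordProd_of_map_simple cs hρ, hab, mulVec_add,
    mulVec_smul, mulVec_smul]
  exact add_nonneg (smul_nonneg ha (ih _ (hN ▸ hu) hui rfl))
    (smul_nonneg hb (ih _ (hN ▸ hu) huj rfl))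

theorem injective_of_map_simple
    (hρ : ∀ i, (ρ (cs.simple i) : Matrix (Fin n) (Fin n) ℝ) = geomRefl M i) :
    Function.Injective ρ := by
  rw [injective_iff_map_eq_one]
  intro w hw
  by_contra hne
  obtain ⟨i, hi⟩ := cs.exists_rightDescent_of_ne_one hne
  have hpos := mulVec_single_nonneg_of_map_simple cs hρ (w := w * cs.simple i) (i := i)
    (by rwa [simple_mul_simple_cancel_right])
  rw [map_mul, hw, one_mul, hρ, geomRefl_mulVec_single_self] at hpos
  exact absurd (hpos i) (by simp)

end GeometricRepresentation

/-- For any Coxeter matrix `M` on `{1,…,n}` with Coxeter group `W(M)`, there is a unique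
group homomorphism `ρ : W(M) → GL_n(ℝ)` sending each simple reflection `sᵢ` to the
reflection `rᵢ`, and this geometric representation is injective (faithful). -/
theorem statement10 {n : ℕ} (M : CoxeterMatrix (Fin n)) :
    (∃! ρ : M.Group →* GL (Fin n) ℝ,
      ∀ i : Fin n, (ρ (M.simple i) : Matrix (Fin n) (Fin n) ℝ) = geomRefl M i) ∧
    (∀ ρ : M.Group →* GL (Fin n) ℝ,
      (∀ i : Fin n, (ρ (M.simple i) : Matrix (Fin n) (Fin n) ℝ) = geomRefl M i) →
      Function.Injective ρ) :=
  ⟨⟨geomRepr M, geomRepr_simple M, fun _ hρ => M.toCoxeterSystem.ext_simple fun i =>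
      Units.ext ((hρ i).trans (geomRepr_simple M i).symm)⟩,
    fun _ hρ => injective_of_map_simple M.toCoxeterSystem hρ⟩
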